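/- Let f_{0,0}, f_{1,0}, f_{2,0}, f_{3,0}: ℝ² → ℝ be smooth and satisfy ∂_x f_{j−1,0} + ∂_y f_{j,0} = 0 on ℝ² for all 0 ≤ j ≤ 4 (with f_{−1,0} = f_{4,0}... := 0 for indices outside 0..3). Define φ_{j,1} := ((j+1)/2) ∂_x f_{j+1,0} + ((3−j)/2) ∂_y f_{j,0}, φ_{j,2} := (1/2) Σ_{a=0}^{2} C(j+a, a) C(3−j−a, 2−a) ∂_x^a ∂_y^{2−a} f_{j+a,0} (with C the binomial coefficient, 0 for invalid entries, and φ_{−1,2} := 0), and Q_{j,2} := 2 ∂_x φ_{j−1,2} + 2 ∂_y φ_{j,2} + ∂_x² φ_{j,1} + ∂_y² φ_{j,1}. Then Q_{j,2} vanishes identically on ℝ² for j = 0, 1, 2; consequently, for N = 3 the ℓ = 1 quantum determining equations are independent of ħ and identical to the classical ones. -/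

import Mathlib

noncomputable section

/-- Partial derivative with respect to `x` of a function on `ℝ²`. -/
def pdx (f : ℝ × ℝ → ℝ) : ℝ × ℝ → ℝ := fun q => fderiv ℝ f q (1, 0)

/-- Partial derivative with respect to `y` of a function on `ℝ²`. -/
def pdy (f : ℝ × ℝ → ℝ) : ℝ × ℝ → ℝ := fun q => fderiv ℝ f q (0, 1)

/-- Binomial coefficient with integer entries, equal to `0` when the lower entry is
negative or exceeds the upper entry. -/
def intChoose (n k : ℤ) : ℝ :=
  if 0 ≤ k ∧ k ≤ n then (n.toNat.choose k.toNat : ℝ) else 0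

/-- `φ_{j,1} = ((j+1)/2) ∂_x f_{j+1,0} + ((N−j)/2) ∂_y f_{j,0}` (here `N = 3`). -/
def phi1 (N : ℕ) (f0 : ℤ → ℝ × ℝ → ℝ) (j : ℤ) : ℝ × ℝ → ℝ := fun q =>
  ((j : ℝ) + 1) / 2 * pdx (f0 (j + 1)) q + ((N : ℝ) - (j : ℝ)) / 2 * pdy (f0 j) q

/-- `φ_{j,2} = (1/2) Σ_{a=0}^{2} C(j+a,a) C(N−j−a,2−a) ∂_x^a ∂_y^{2−a} f_{j+a,0}`,
with the convention `φ_{−1,2} = 0`. -/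
def phi2 (N : ℕ) (f0 : ℤ → ℝ × ℝ → ℝ) (j : ℤ) : ℝ × ℝ → ℝ :=
  if j = -1 then 0 else fun q =>
    (1 / 2) * ∑ a ∈ Finset.range 3,
      intChoose (j + (a : ℤ)) (a : ℤ) * intChoose ((N : ℤ) - j - (a : ℤ)) (2 - (a : ℤ)) *
        (pdx^[a] (pdy^[2 - a] (f0 (j + (a : ℤ))))) q

/-- The quantum correction `Q_{j,2} = 2∂_x φ_{j−1,2} + 2∂_y φ_{j,2} + ∂_x² φ_{j,1} + ∂_y² φ_{j,1}`. -/
def Q2 (N : ℕ) (f0 : ℤ → ℝ × ℝ → ℝ) (j : ℤ) : ℝ × ℝ → ℝ := fun q =>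
  2 * pdx (phi2 N f0 (j - 1)) q + 2 * pdy (phi2 N f0 j) q +
    (pdx^[2] (phi1 N f0 j)) q + (pdy^[2] (phi1 N f0 j)) q

/-!
The leading-order equations `∂ₓ f_{k-1} + ∂_y f_k = 0` (with `f_k = 0` for `k ∉ [0, 3]`) trade an
`x`-derivative of `f_{k-1}` for minus a `y`-derivative of `f_k`. Pushing all derivatives down to
`f_{-1} = 0` or up to `f_4 = 0` shows `∂ₓ^m ∂_y^n f_k = 0` unless `n ≤ k ≤ 3 - m`, so a third-order
derivative `∂ₓ^m ∂_y^n f_k` (`m + n = 3`) can only survive when `k = n`. Expanding `Q_{j,2}` into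
third-order derivatives, every term vanishes for `j = 0, 2`, and for `j = 1` what remains is
`3 ∂ₓ²∂_y f₁ + 3 ∂ₓ∂_y² f₂ = 3 ∂ₓ∂_y (∂ₓ f₁ + ∂_y f₂) = 0`.
-/

open scoped ContDiff

section DirectionalDerivative

variable {E F : Type*} [NormedAddCommGroup E] [NormedSpace ℝ E]
  [NormedAddCommGroup F] [NormedSpace ℝ F] {f : E → F}

theorem ContDiff.fderiv_apply_const {n : WithTop ℕ∞} (hf : ContDiff ℝ (n + 1) f) (v : E) :
    ContDiff ℝ n fun q => fderiv ℝ f q v :=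
  (hf.fderiv_right le_rfl).clm_apply contDiff_const

theorem fderiv_fderiv_apply_comm (hf : ContDiff ℝ 2 f) (q v w : E) :
    fderiv ℝ (fun p => fderiv ℝ f p v) q w = fderiv ℝ (fun p => fderiv ℝ f p w) q v := by
  have hf' : DifferentiableAt ℝ (fderiv ℝ f) q :=
    (hf.fderiv_right (m := 1) le_rfl).differentiable one_ne_zero q
  simp only [fderiv_clm_apply hf' (differentiableAt_const _), fderiv_fun_const]
  simpa using (hf.contDiffAt.isSymmSndFDerivAt (by simp)) w v

end DirectionalDerivative

section PartialDerivatives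

variable {f g : ℝ × ℝ → ℝ}

theorem contDiff_pdx (hf : ContDiff ℝ ∞ f) : ContDiff ℝ ∞ (pdx f) :=
  (hf.of_le (by simp)).fderiv_apply_const _

theorem contDiff_pdy (hf : ContDiff ℝ ∞ f) : ContDiff ℝ ∞ (pdy f) :=
  (hf.of_le (by simp)).fderiv_apply_const _

theorem pdx_add (hf : Differentiable ℝ f) (hg : Differentiable ℝ g) :
    pdx (f + g) = pdx f + pdx g := by
  ext q; simp [pdx, fderiv_add (hf q) (hg q)]

theorem pdy_add (hf : Differentiable ℝ f) (hg : Differentiable ℝ g) :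
    pdy (f + g) = pdy f + pdy g := by
  ext q; simp [pdy, fderiv_add (hf q) (hg q)]

theorem pdx_smul (c : ℝ) (f : ℝ × ℝ → ℝ) : pdx (c • f) = c • pdx f := by
  ext q; simp [pdx, fderiv_const_smul_field]

theorem pdy_smul (c : ℝ) (f : ℝ × ℝ → ℝ) : pdy (c • f) = c • pdy f := by
  ext q; simp [pdy, fderiv_const_smul_field]

theorem pdx_zero : pdx 0 = 0 := by
  simpa using pdx_smul 0 0

theorem pdy_zero : pdy 0 = 0 := by
  simpa using pdy_smul 0 0

theorem pdx_pdy_comm (hf : ContDiff ℝ 2 f) : pdx (pdy f) = pdy (pdx f) :=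
  funext fun q => fderiv_fderiv_apply_comm hf q _ _

end PartialDerivatives

def pdxy (m n : ℕ) (f : ℝ × ℝ → ℝ) : ℝ × ℝ → ℝ := pdx^[m] (pdy^[n] f)

section MixedPartialDerivatives

variable {f g : ℝ × ℝ → ℝ} {m n : ℕ}

theorem pdxy_succ_left : pdxy (m + 1) n f = pdx (pdxy m n f) :=
  Function.iterate_succ_apply' ..

theorem pdxy_zero_succ : pdxy 0 (n + 1) f = pdy (pdxy 0 n f) :=
  Function.iterate_succ_apply' ..

theorem pdxy_induction (P : (ℝ × ℝ → ℝ) → Prop) (hf : P f) (hx : ∀ g, P g → P (pdx g))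
    (hy : ∀ g, P g → P (pdy g)) (m n : ℕ) : P (pdxy m n f) := by
  induction m with
  | zero =>
    induction n with
    | zero => exact hf
    | succ n ih => rw [pdxy_zero_succ]; exact hy _ ih
  | succ m ih => rw [pdxy_succ_left]; exact hx _ ih

theorem contDiff_pdxy (hf : ContDiff ℝ ∞ f) (m n : ℕ) : ContDiff ℝ ∞ (pdxy m n f) :=
  pdxy_induction _ hf (fun _ => contDiff_pdx) (fun _ => contDiff_pdy) m n

theorem pdxy_zero_right (m n : ℕ) : pdxy m n 0 = 0 :=
  pdxy_induction (· = 0) rfl (by rintro _ rfl; exact pdx_zero) (by rintro _ rfl; exact pdy_zero)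
    m n

theorem pdxy_add (hf : ContDiff ℝ ∞ f) (hg : ContDiff ℝ ∞ g) :
    pdxy m n (f + g) = pdxy m n f + pdxy m n g := by
  have hd : ∀ {h} (_ : ContDiff ℝ ∞ h) m n, Differentiable ℝ (pdxy m n h) :=
    fun h m n => (contDiff_pdxy h m n).differentiable (by simp)
  induction m with
  | zero =>
    induction n with
    | zero => rfl
    | succ n ih =>
      rw [pdxy_zero_succ, ih, pdy_add (hd hf 0 n) (hd hg 0 n), ← pdxy_zero_succ,
        ← pdxy_zero_succ]
  | succ m ih =>
    rw [pdxy_succ_left, ih, pdx_add (hd hf m n) (hd hg m n), ← pdxy_succ_left,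
      ← pdxy_succ_left]

theorem pdxy_smul (c : ℝ) (f : ℝ × ℝ → ℝ) : pdxy m n (c • f) = c • pdxy m n f := by
  induction m with
  | zero =>
    induction n with
    | zero => rfl
    | succ n ih => rw [pdxy_zero_succ, ih, pdy_smul, ← pdxy_zero_succ]
  | succ m ih => rw [pdxy_succ_left, ih, pdx_smul, ← pdxy_succ_left]

theorem pdxy_neg (f : ℝ × ℝ → ℝ) : pdxy m n (-f) = -pdxy m n f := by
  simpa only [neg_one_smul] using pdxy_smul (m := m) (n := n) (-1) f

theorem pdy_pdxy (hf : ContDiff ℝ ∞ f) : pdy (pdxy m n f) = pdxy m (n + 1) f := by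
  induction m with
  | zero => exact pdxy_zero_succ.symm
  | succ m ih =>
    rw [pdxy_succ_left, pdxy_succ_left, ← ih,
      pdx_pdy_comm ((contDiff_pdxy hf m n).of_le ENat.LEInfty.out)]

theorem pdxy_pdxy (hf : ContDiff ℝ ∞ f) (m n m' n' : ℕ) :
    pdxy m n (pdxy m' n' f) = pdxy (m + m') (n + n') f := by
  induction m with
  | zero =>
    induction n with
    | zero => simp only [zero_add]; rfl
    | succ n ih => rw [pdxy_zero_succ, ih, pdy_pdxy hf, Nat.add_right_comm]
  | succ m ih => rw [pdxy_succ_left, ih, ← pdxy_succ_left, Nat.add_right_comm]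

theorem pdxy_sum {ι : Type*} {s : Finset ι} {g : ι → ℝ × ℝ → ℝ}
    (hg : ∀ i ∈ s, ContDiff ℝ ∞ (g i)) :
    pdxy m n (∑ i ∈ s, g i) = ∑ i ∈ s, pdxy m n (g i) := by
  classical
  induction s using Finset.induction_on with
  | empty => simp [pdxy_zero_right]
  | insert i s hi ih =>
    rw [Finset.forall_mem_insert] at hg
    have hs : ContDiff ℝ ∞ (∑ i ∈ s, g i) := by
      rw [Finset.sum_fn]; exact ContDiff.sum hg.2
    rw [Finset.sum_insert hi, Finset.sum_insert hi, pdxy_add hg.1 hs, ih hg.2]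

end MixedPartialDerivatives

/-- `f k` stands for `f_{k,0}`. As `f k = 0` outside `[0, N]`, imposing the leading-order equation
for every `k : ℤ` is the same as imposing it for `0 ≤ k ≤ N + 1`. -/
structure IsLeadingSolution (N : ℕ) (f : ℤ → ℝ × ℝ → ℝ) : Prop where
  contDiff : ∀ k, ContDiff ℝ ∞ (f k)
  eq_zero_of_neg : ∀ k < 0, f k = 0
  eq_zero_of_gt : ∀ k, (N : ℤ) < k → f k = 0
  pdx_add_pdy : ∀ k, pdx (f (k - 1)) + pdy (f k) = 0

namespace IsLeadingSolution

variable {N : ℕ} {f : ℤ → ℝ × ℝ → ℝ}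

theorem pdxy_succ_left_sub_one (hS : IsLeadingSolution N f) (m n : ℕ) (k : ℤ) :
    pdxy (m + 1) n (f (k - 1)) = -pdxy m (n + 1) (f k) := by
  have hx : pdxy 1 0 (f (k - 1)) = -pdxy 0 1 (f k) :=
    eq_neg_of_add_eq_zero_left (hS.pdx_add_pdy k)
  calc pdxy (m + 1) n (f (k - 1)) = pdxy m n (pdxy 1 0 (f (k - 1))) :=
        (pdxy_pdxy (hS.contDiff _) m n 1 0).symm
    _ = -pdxy m (n + 1) (f k) := by rw [hx, pdxy_neg, pdxy_pdxy (hS.contDiff _), add_zero]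

theorem pdxy_eq_zero_of_lt (hS : IsLeadingSolution N f) {k : ℤ} {n : ℕ} (h : k < n) (m : ℕ) :
    pdxy m n (f k) = 0 := by
  induction n generalizing m k with
  | zero => rw [hS.eq_zero_of_neg k (mod_cast h), pdxy_zero_right]
  | succ n ih =>
    rw [← neg_eq_zero, ← hS.pdxy_succ_left_sub_one, ih (by push_cast at h; linarith)]

theorem pdxy_eq_zero_of_lt_add (hS : IsLeadingSolution N f) {k : ℤ} {m : ℕ} (h : N < k + m)
    (n : ℕ) : pdxy m n (f k) = 0 := by
  induction m generalizing n k with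
  | zero => rw [hS.eq_zero_of_gt k (by simpa using h), pdxy_zero_right]
  | succ m ih =>
    rw [← add_sub_cancel_right k 1, hS.pdxy_succ_left_sub_one, ih (by push_cast at h; linarith),
      neg_zero]

theorem of_range (hf : ∀ k : ℤ, 0 ≤ k → k ≤ N → ContDiff ℝ ∞ (f k))
    (hzero : ∀ k : ℤ, (k < 0 ∨ N < k) → f k = 0)
    (hlead : ∀ k : ℤ, 0 ≤ k → k ≤ N + 1 → ∀ q, pdx (f (k - 1)) q + pdy (f k) q = 0) :
    IsLeadingSolution N f where
  contDiff k := by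
    by_cases hk : 0 ≤ k ∧ k ≤ N
    · exact hf k hk.1 hk.2
    · rw [hzero k (by omega)]; exact contDiff_zero_fun
  eq_zero_of_neg k hk := hzero k (.inl hk)
  eq_zero_of_gt k hk := hzero k (.inr hk)
  pdx_add_pdy k := by
    by_cases hk : 0 ≤ k ∧ k ≤ N + 1
    · exact funext (hlead k hk.1 hk.2)
    · rw [hzero k (by omega), hzero (k - 1) (by omega), pdx_zero, pdy_zero, add_zero]

end IsLeadingSolution

section QuantumCorrection

variable {N : ℕ} {f : ℤ → ℝ × ℝ → ℝ} {j : ℤ}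

theorem phi1_eq : phi1 N f j =
    (((j : ℝ) + 1) / 2) • pdxy 1 0 (f (j + 1)) + (((N : ℝ) - j) / 2) • pdxy 0 1 (f j) := rfl

theorem phi2_neg_one : phi2 N f (-1) = 0 := if_pos rfl

theorem phi2_eq (hj : j ≠ -1) : phi2 N f j = ∑ a ∈ Finset.range 3,
    (1 / 2 * intChoose (j + a) a * intChoose (N - j - a) (2 - a)) •
      pdxy a (2 - a) (f (j + a)) := by
  ext q
  simp [phi2, hj, Finset.mul_sum, mul_assoc, pdxy]

theorem Q2_eq : Q2 N f j =
    (2 : ℝ) • pdxy 1 0 (phi2 N f (j - 1)) + (2 : ℝ) • pdxy 0 1 (phi2 N f j) +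
      pdxy 2 0 (phi1 N f j) + pdxy 0 2 (phi1 N f j) := rfl

theorem pdxy_phi1 (hf : ∀ k, ContDiff ℝ ∞ (f k)) (m n : ℕ) : pdxy m n (phi1 N f j) =
    (((j : ℝ) + 1) / 2) • pdxy (m + 1) n (f (j + 1)) +
      (((N : ℝ) - j) / 2) • pdxy m (n + 1) (f j) := by
  rw [phi1_eq, pdxy_add, pdxy_smul, pdxy_smul, pdxy_pdxy (hf _), pdxy_pdxy (hf _), add_zero,
    add_zero]
  all_goals exact (contDiff_pdxy (hf _) _ _).const_smul (_ : ℝ)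

theorem pdxy_phi2 (hf : ∀ k, ContDiff ℝ ∞ (f k)) (hj : j ≠ -1) (m n : ℕ) :
    pdxy m n (phi2 N f j) = ∑ a ∈ Finset.range 3,
      (1 / 2 * intChoose (j + a) a * intChoose (N - j - a) (2 - a)) •
        pdxy (m + a) (n + (2 - a)) (f (j + a)) := by
  rw [phi2_eq hj, pdxy_sum fun a _ => by exact (contDiff_pdxy (hf _) _ _).const_smul (_ : ℝ)]
  simp only [pdxy_smul, pdxy_pdxy (hf _)]

end QuantumCorrection

theorem Q2_three_eq_zero {f : ℤ → ℝ × ℝ → ℝ} (hS : IsLeadingSolution 3 f) {j : ℕ}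
    (hj : j ≤ 2) : Q2 3 f j = 0 := by
  have hf := hS.contDiff
  have hx : pdxy 2 1 (f 1) = -pdxy 1 2 (f 2) := by simpa using hS.pdxy_succ_left_sub_one 1 1 2
  interval_cases j <;>
    simp [Q2_eq, phi2_neg_one, pdxy_zero_right, pdxy_phi2 hf, pdxy_phi1 hf, Finset.sum_range_succ,
      intChoose, hS.pdxy_eq_zero_of_lt, hS.pdxy_eq_zero_of_lt_add, hx]
  -- only `j = 1` is left, where the two surviving terms cancel through `hx`
  module

/-- for `N = 3`, if the smooth functions `f_{0,0}, …, f_{3,0}` (zero outside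
indices `0..3`) satisfy the leading-order equations `∂_x f_{j−1,0} + ∂_y f_{j,0} = 0` for
`0 ≤ j ≤ 4`, then the quantum corrections `Q_{j,2}` vanish identically for `j = 0, 1, 2`. -/
theorem stmt_14 (f0 : ℤ → ℝ × ℝ → ℝ)
    (hf0 : ∀ j : ℤ, 0 ≤ j → j ≤ 3 → ContDiff ℝ (⊤ : ℕ∞) (f0 j))
    (hzero : ∀ j : ℤ, (j < 0 ∨ 3 < j) → f0 j = 0)
    (hlead : ∀ j : ℤ, 0 ≤ j → j ≤ 4 →
      ∀ q : ℝ × ℝ, pdx (f0 (j - 1)) q + pdy (f0 j) q = 0) :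
    ∀ j : ℕ, j ≤ 2 → ∀ q : ℝ × ℝ, Q2 3 f0 (j : ℤ) q = 0 := by
  intro j hj q
  rw [Q2_three_eq_zero (IsLeadingSolution.of_range hf0 hzero hlead) hj, Pi.zero_apply]
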